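/- Let x ∈ {0,1}^Z be generic for an ergodic measure μ ≠ δ_{0^∞}, with orbit closure X having {0^∞} as its unique minimal subsystem, and suppose there is a strictly increasing sequence (n_k) such that 0^{n_k} is the unique right-special word of length n_k in X for every k. Then this situation is contradictory: no such sequence (n_k) exists, provided additionally c_X(n) < Kn for all n for some constant K. -/

import Mathlib

open Filter Topology MeasureTheory

variable {A : Type*} {B : Type*}

/-- The shift by `m` on bi-infinite sequences. -/
def shiftBy (m : ℤ) (x : ℤ → A) : ℤ → A := fun i => x (i + m)

/-- The orbit closure of a point. -/
def orbitClosure [TopologicalSpace A] (x : ℤ → A) : Set (ℤ → A) :=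
  closure {y | ∃ m : ℤ, y = shiftBy m x}

/-- A set of sequences invariant under all shifts. -/
def ShiftInvariant (X : Set (ℤ → A)) : Prop := ∀ m : ℤ, ∀ y ∈ X, shiftBy m y ∈ X

/-- A subshift: closed and shift-invariant. -/
def IsSubshift [TopologicalSpace A] (X : Set (ℤ → A)) : Prop :=
  IsClosed X ∧ ShiftInvariant X

/-- The word `w` occurs in `x` at position `i`. -/
def occursAt (x : ℤ → A) (w : List A) (i : ℤ) : Prop :=
  ∀ k : Fin w.length, x (i + (k.val : ℤ)) = w.get k

/-- The word `w` occurs somewhere in some point of `X`. -/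
def WordIn (X : Set (ℤ → A)) (w : List A) : Prop :=
  ∃ x ∈ X, ∃ i : ℤ, occursAt x w i

/-- The language of `X` in length `n`. -/
def langOf (X : Set (ℤ → A)) (n : ℕ) : Set (List A) :=
  {w | w.length = n ∧ WordIn X w}

/-- The complexity function of `X`. -/
noncomputable def complexity (X : Set (ℤ → A)) (n : ℕ) : ℕ := (langOf X n).ncard

/-- `w` is right-special in `X`. -/
def RightSpecial (X : Set (ℤ → A)) (w : List A) : Prop :=
  ∃ a b : A, a ≠ b ∧ WordIn X (w ++ [a]) ∧ WordIn X (w ++ [b])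

/-- `w` is left-special in `X`. -/
def LeftSpecial (X : Set (ℤ → A)) (w : List A) : Prop :=
  ∃ a b : A, a ≠ b ∧ WordIn X (a :: w) ∧ WordIn X (b :: w)

/-- The set of right-special words of length `n`. -/
def RS (X : Set (ℤ → A)) (n : ℕ) : Set (List A) :=
  {w | w.length = n ∧ RightSpecial X w}

/-- The length-`ℓ` word of `x` starting at position `i`. -/
def wordAt (x : ℤ → A) (i : ℤ) (ℓ : ℕ) : List A :=
  List.ofFn (fun t : Fin ℓ => x (i + (t.val : ℤ)))

/-- `x` is a recurrent point: every word in it occurs infinitely often. -/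
def RecurrentPt (x : ℤ → A) : Prop :=
  ∀ n : ℕ, ∀ i N : ℤ, ∃ j : ℤ, N ≤ j ∧ ∀ k : ℕ, k < n → x (j + k) = x (i + k)

/-- `x` is eventually periodic to the right. -/
def EventuallyPeriodicRight (x : ℤ → A) : Prop :=
  ∃ p : ℤ, 0 < p ∧ ∃ N : ℤ, ∀ i : ℤ, N < i → x (i + p) = x i

/-- `x` is eventually periodic to the left. -/
def EventuallyPeriodicLeft (x : ℤ → A) : Prop :=
  ∃ p : ℤ, 0 < p ∧ ∃ N : ℤ, ∀ i : ℤ, i < N → x (i - p) = x i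

/-- `M` is a minimal subsystem of `X`. -/
def MinimalSubsystem [TopologicalSpace A] (X M : Set (ℤ → A)) : Prop :=
  M ⊆ X ∧ M.Nonempty ∧ IsClosed M ∧ ShiftInvariant M ∧
    ∀ M' ⊆ M, M'.Nonempty → IsClosed M' → ShiftInvariant M' → M' = M

/-- `x` is a generic point for the measure `μ`. -/
def GenericFor [TopologicalSpace A] [MeasurableSpace A] (x : ℤ → A)
    (μ : Measure (ℤ → A)) : Prop :=
  ∀ f : (ℤ → A) → ℝ, Continuous f →
    Tendsto (fun N : ℕ => (∑ i ∈ Finset.range N, f (shiftBy i x)) / (N : ℝ)) atTop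
      (𝓝 (∫ y, f y ∂μ))

/-- `μ` is a generic measure for `X`. -/
def GenericMeasure [TopologicalSpace A] [MeasurableSpace A] (X : Set (ℤ → A))
    (μ : Measure (ℤ → A)) : Prop :=
  ∃ x ∈ X, GenericFor x μ

/-!
If `0^N` is the only right-special word of length `N`, two equal windows of length `N` in `x` stay
synchronized until the next occurrence of `0^N`. Hence `0^N` recurs in `x` (otherwise `x` is
eventually periodic and yields a periodic minimal subsystem other than `{0^∞}`), and a stretch of
`x` without `0^N` has length at most `(K + 2) N`, since its windows are pairwise distinct and there
are fewer than `K N` words of length `N`. Passing from a scale `N₀` to a scale `N₁ ≥ 2 N₀` along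
`n_k`, the proportion of ones before an occurrence of `0^{N₁}` drops by the factor
`(2K+5)/(2K+6)`, so the density of ones in `x`, read along these occurrences, is arbitrarily
small. By genericity that density is `μ {y | y 0 ≠ 0}`, which is positive because `μ` is
shift-invariant and differs from `δ_{0^∞}`.
-/

def RunAt (x : ℤ → A) (o : A) (N : ℕ) (s : ℤ) : Prop := ∀ i : ℕ, i < N → x (s + i) = o

section Words

variable {X : Set (ℤ → A)} {x : ℤ → A} {o : A} {N : ℕ}

@[simp]
theorem wordAt_length (x : ℤ → A) (p : ℤ) (ℓ : ℕ) : (wordAt x p ℓ).length = ℓ := by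
  simp [wordAt]

theorem wordAt_eq_wordAt_iff {p q : ℤ} {ℓ : ℕ} :
    wordAt x p ℓ = wordAt x q ℓ ↔ ∀ s : ℕ, s < ℓ → x (p + s) = x (q + s) := by
  simp only [wordAt, List.ofFn_inj, funext_iff, Fin.forall_iff]

theorem wordAt_eq_replicate_iff {p : ℤ} : wordAt x p N = List.replicate N o ↔ RunAt x o N p := by
  simp [wordAt, List.eq_replicate_iff, List.mem_ofFn, RunAt, Fin.exists_iff]

theorem wordAt_succ (x : ℤ → A) (p : ℤ) (N : ℕ) :
    wordAt x p (N + 1) = wordAt x p N ++ [x (p + N)] := by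
  rw [wordAt, wordAt, List.ofFn_succ', List.concat_eq_append]
  rfl

theorem wordAt_mem_langOf (hx : x ∈ X) (p : ℤ) (ℓ : ℕ) : wordAt x p ℓ ∈ langOf X ℓ :=
  ⟨wordAt_length x p ℓ, x, hx, p, fun ⟨k, hk⟩ => by simp [wordAt]⟩

theorem langOf_finite [Finite A] (X : Set (ℤ → A)) (N : ℕ) : (langOf X N).Finite := by
  refine (Set.finite_range (fun f : Fin N → A => List.ofFn f)).subset ?_
  rintro w ⟨rfl, -⟩
  exact ⟨w.get, List.ofFn_get w⟩

end Words

section Synchronization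

variable {X : Set (ℤ → A)} {x : ℤ → A} {o : A} {N : ℕ}

/-- Windows of length `N` other than `o^N` are not right-special, so their right extension in
`x` is determined by the window. -/
theorem agree_of_forall_not_runAt (hx : x ∈ X) (hRS : RS X N ⊆ {List.replicate N o}) {p q : ℤ}
    (hpq : ∀ s : ℕ, s < N → x (p + s) = x (q + s)) {t : ℕ}
    (hq : ∀ k : ℕ, k < t → ¬RunAt x o N (q + k)) :
    ∀ s : ℕ, s < N + t → x (p + s) = x (q + s) := by
  induction t with
  | zero => simpa using hpq
  | succ t ih =>
    have ih := ih fun k hk => hq k (by omega)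
    intro s hs
    rcases Nat.lt_or_ge s (N + t) with hs' | hs'
    · exact ih s hs'
    obtain rfl : s = N + t := by omega
    have hwin : wordAt x (p + t) N = wordAt x (q + t) N := by
      refine wordAt_eq_wordAt_iff.2 fun s hs => ?_
      simpa [add_assoc, add_comm] using ih (t + s) (by omega)
    have hnot : wordAt x (q + t) N ∉ RS X N := fun hmem =>
      hq t (by omega) (wordAt_eq_replicate_iff.1 (hRS hmem))
    by_contra hne
    refine hnot ⟨wordAt_length x _ N, x (p + t + N), x (q + t + N), ?_, ?_, ?_⟩
    · rwa [show ((N + t : ℕ) : ℤ) = t + N by push_cast; ring, ← add_assoc, ← add_assoc] at hne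
    · rw [← hwin, ← wordAt_succ]
      exact (wordAt_mem_langOf hx _ _).2
    · rw [← wordAt_succ]
      exact (wordAt_mem_langOf hx _ _).2

theorem length_le_of_forall_not_runAt [Finite A] (hx : x ∈ X)
    (hRS : RS X N ⊆ {List.replicate N o}) (hruns : ∀ p : ℤ, ∃ k : ℕ, RunAt x o N (p + k))
    {a : ℤ} {ℓ : ℕ} (hno : ∀ i : ℕ, i + N ≤ ℓ → ¬RunAt x o N (a + i)) :
    ℓ ≤ complexity X N + 2 * N := by
  classical
  -- Equal windows at `p < q` would, by synchronization, copy the first run after `q` back to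
  -- a position either between `q` and that run or inside `[a, a + ℓ)`.
  have hinj : Set.InjOn (fun i : ℕ => wordAt x (a + N + i) N) (Finset.range (ℓ - 2 * N)) := by
    suffices ∀ i j : ℕ, i < j → j + 2 * N < ℓ → wordAt x (a + N + i) N ≠ wordAt x (a + N + j) N by
      intro i hi j hj hij
      simp only [Finset.coe_range, Set.mem_Iio] at hi hj
      by_contra hne
      rcases lt_or_gt_of_ne hne with h | h
      · exact this i j h (by omega) hij
      · exact this j i h (by omega) hij.symm
    intro i j hij hj heq
    let k := Nat.find (hruns (a + N + j))
    have hrun : RunAt x o N (a + N + j + k) := Nat.find_spec (hruns (a + N + j))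
    have hagree := agree_of_forall_not_runAt hx hRS (wordAt_eq_wordAt_iff.1 heq)
      (t := k) fun k' hk' => Nat.find_min (hruns (a + N + j)) hk'
    have hrun' : RunAt x o N (a + N + i + k) := fun s hs => by
      rw [show a + N + i + k + s = a + N + i + (k + s : ℕ) by push_cast; ring,
        hagree (k + s) (by omega), ← hrun s hs]
      push_cast; ring_nf
    rcases Nat.lt_or_ge k (j - i) with hk | hk
    · exact hno (N + i + k) (by omega) (by simpa [add_assoc] using hrun')
    · refine Nat.find_min (hruns (a + N + j)) (m := k - (j - i)) (by omega) ?_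
      convert hrun' using 1
      push_cast [Nat.cast_sub hk, Nat.cast_sub hij.le]
      ring
  have hmaps : Set.MapsTo (fun i : ℕ => wordAt x (a + N + i) N) (Finset.range (ℓ - 2 * N))
      (langOf_finite X N).toFinset := fun i _ => by
    simpa using wordAt_mem_langOf hx (a + N + i) N
  have hcard := Finset.card_le_card_of_injOn _ hmaps hinj
  rw [Finset.card_range, ← Set.ncard_eq_toFinset_card _ (langOf_finite X N)] at hcard
  unfold complexity
  omega

end Synchronization

section Periodic

variable {X : Set (ℤ → A)} {x z : ℤ → A} {d : ℤ}

@[simp]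
theorem shiftBy_shiftBy (m n : ℤ) (x : ℤ → A) : shiftBy m (shiftBy n x) = shiftBy (m + n) x := by
  funext i
  simp [shiftBy, add_assoc]

theorem exists_periodic_eq_of_tail_periodic (hd : 0 < d) {P : ℤ}
    (htail : ∀ i ≥ P, x (i + d) = x i) :
    ∃ z : ℤ → A, Function.Periodic z d ∧ ∀ i ≥ P, x i = z i := by
  have hmul : ∀ k : ℕ, ∀ i ≥ P, x (i + k * d) = x i := by
    intro k
    induction k with
    | zero => simp
    | succ k ih =>
      intro i hi
      rw [← ih i hi, Nat.cast_succ, add_one_mul, ← add_assoc, htail _ (by nlinarith)]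
  refine ⟨fun i => x (P + (i - P) % d), fun i => by
    simp only [add_sub_right_comm, Int.add_emod_right], fun i hi => ?_⟩
  have hq : 0 ≤ (i - P) / d := Int.ediv_nonneg (by omega) hd.le
  have := hmul ((i - P) / d).toNat (P + (i - P) % d) (by simp [Int.emod_nonneg _ hd.ne'])
  rw [Int.toNat_of_nonneg hq, add_assoc, Int.emod_add_ediv_mul] at this
  simpa using this

theorem mem_of_periodic_of_eq_on_tail [TopologicalSpace A] (hX : IsSubshift X) (hx : x ∈ X)
    (hz : Function.Periodic z d) (hd : 0 < d) {P : ℤ} (hxz : ∀ i ≥ P, x i = z i) : z ∈ X := by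
  refine hX.1.mem_of_tendsto (b := atTop) (f := fun j : ℕ => shiftBy (j * d) x) ?_
    (Eventually.of_forall fun j => hX.2 _ x hx)
  refine tendsto_pi_nhds.2 fun i => tendsto_const_nhds.congr' ?_
  filter_upwards [eventually_ge_atTop (P - i).toNat] with j hj
  have hj : P - i ≤ j := by omega
  rw [shiftBy, hxz _ (by nlinarith), hz.nat_mul j i]

theorem minimalSubsystem_range_shiftBy [TopologicalSpace A] [T1Space A] (hX : ShiftInvariant X)
    (hzX : z ∈ X) (hz : Function.Periodic z d) (hd : 0 < d) :
    MinimalSubsystem X (Set.range fun k => shiftBy k z) := by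
  have hmod : ∀ k, shiftBy k z = shiftBy (k % d) z := fun k => by
    funext i
    conv_lhs => rw [← Int.emod_add_ediv_mul k d]
    exact (congrArg z (add_assoc _ _ _).symm).trans (hz.int_mul _ _)
  refine ⟨?_, ⟨z, 0, by funext i; simp [shiftBy]⟩, ?_, ?_, ?_⟩
  · rintro _ ⟨k, rfl⟩
    exact hX k z hzX
  · refine Set.Finite.isClosed (((Set.finite_Ico 0 d).image fun k => shiftBy k z).subset ?_)
    rintro _ ⟨k, rfl⟩
    exact ⟨k % d, ⟨Int.emod_nonneg k hd.ne', Int.emod_lt_of_pos k hd⟩, (hmod k).symm⟩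
  · rintro m _ ⟨k, rfl⟩
    exact ⟨m + k, (shiftBy_shiftBy m k z).symm⟩
  · rintro M hM ⟨_, hy⟩ - hMinv
    obtain ⟨k, rfl⟩ := hM hy
    refine hM.antisymm ?_
    rintro _ ⟨k', rfl⟩
    simpa using hMinv (k' - k) _ hy

end Periodic

section Runs

variable {X : Set (ℤ → A)} {x : ℤ → A} {o : A} {N : ℕ}

theorem exists_tail_periodic_of_forall_not_runAt [Finite A] (hx : x ∈ X)
    (hRS : RS X N ⊆ {List.replicate N o}) {p : ℤ} (hno : ∀ k : ℕ, ¬RunAt x o N (p + k)) :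
    ∃ P ≥ p, ∃ d : ℤ, 0 < d ∧ ∀ i ≥ P, x (i + d) = x i := by
  obtain ⟨m, m', hlt, heq⟩ := Set.Finite.exists_lt_map_eq_of_forall_mem
    (f := fun m : ℕ => wordAt x (p + m) N) (fun m => wordAt_mem_langOf hx _ _) (langOf_finite X N)
  have hagree (t : ℕ) := agree_of_forall_not_runAt hx hRS (wordAt_eq_wordAt_iff.1 heq) (t := t)
    fun k _ => by simpa [add_assoc] using hno (m' + k)
  refine ⟨p + m, by omega, m' - m, by omega, fun i hi => ?_⟩
  have := hagree ((i - (p + m)).toNat + 1) (i - (p + m)).toNat (by omega)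
  convert this.symm using 2 <;> omega

theorem exists_runAt_add [Finite A] [TopologicalSpace A] [T1Space A] (hX : IsSubshift X)
    (hmin : ∀ M, MinimalSubsystem X M → M = {fun _ => o}) (hx : x ∈ X)
    (hRS : RS X N ⊆ {List.replicate N o}) (p : ℤ) : ∃ k : ℕ, RunAt x o N (p + k) := by
  by_contra! hno
  obtain ⟨P, hP, d, hd, htail⟩ := exists_tail_periodic_of_forall_not_runAt hx hRS hno
  obtain ⟨z, hz, hxz⟩ := exists_periodic_eq_of_tail_periodic hd htail
  have hzX := mem_of_periodic_of_eq_on_tail hX hx hz hd hxz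
  have hzo : z ∈ ({fun _ => o} : Set (ℤ → A)) := by
    rw [← hmin _ (minimalSubsystem_range_shiftBy hX.2 hzX hz hd)]
    exact ⟨0, by funext i; simp [shiftBy]⟩
  refine hno (P - p).toNat fun i _ => ?_
  rw [hxz _ (by omega), hzo]

end Runs

section Counting

variable [DecidableEq A] {X : Set (ℤ → A)} {x : ℤ → A} {o : A}

def countNe (x : ℤ → A) (o : A) (a : ℤ) (ℓ : ℕ) : ℕ :=
  ∑ i ∈ Finset.range ℓ, if x (a + i) = o then 0 else 1

theorem countNe_add (a : ℤ) (m n : ℕ) :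
    countNe x o a (m + n) = countNe x o a m + countNe x o (a + m) n := by
  simp [countNe, Finset.sum_range_add, add_assoc]

theorem countNe_le (a : ℤ) (ℓ : ℕ) : countNe x o a ℓ ≤ ℓ :=
  (Finset.sum_le_sum (g := fun _ => 1) fun _ _ => by split_ifs <;> simp).trans (by simp)

theorem countNe_eq_zero_of_runAt {N : ℕ} {a : ℤ} (h : RunAt x o N a) : countNe x o a N = 0 :=
  Finset.sum_eq_zero fun i hi => by simp [h i (Finset.mem_range.1 hi)]

/-- A stretch followed by `o^N₁` either contains a run `o^N₁`, where it is split, or has length at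
most `(K + 2) N₁`; as `2 N₀ ≤ N₁`, the bound at scale `N₀` then improves by `(2K+5)/(2K+6)`. -/
theorem countNe_bound_step [Finite A] (hx : x ∈ X) {N₀ N₁ K D E : ℕ} (hN₁ : 0 < N₁)
    (hN : 2 * N₀ ≤ N₁) (hRS : RS X N₁ ⊆ {List.replicate N₁ o}) (hc : complexity X N₁ ≤ K * N₁)
    (hruns : ∀ p : ℤ, ∃ k : ℕ, RunAt x o N₁ (p + k))
    (h₀ : ∀ (a : ℤ) (ℓ : ℕ), RunAt x o N₀ (a + ℓ) → D * countNe x o a ℓ ≤ E * (ℓ + N₀))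
    (a : ℤ) (ℓ : ℕ) (hrun : RunAt x o N₁ (a + ℓ)) :
    (2 * K + 6) * D * countNe x o a ℓ ≤ (2 * K + 5) * E * (ℓ + N₁) := by
  induction ℓ using Nat.strong_induction_on generalizing a with
  | _ ℓ ih =>
  by_cases hsplit : ∃ i, i + N₁ ≤ ℓ ∧ RunAt x o N₁ (a + i)
  · obtain ⟨i, hi, hrun_i⟩ := hsplit
    obtain ⟨r, rfl⟩ : ∃ r, ℓ = i + (N₁ + r) := ⟨ℓ - i - N₁, by omega⟩
    have h₁ := ih i (by omega) a hrun_i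
    have h₂ := ih r (by omega) (a + i + N₁) (by convert hrun using 1; push_cast; ring)
    rw [countNe_add, countNe_add, countNe_eq_zero_of_runAt hrun_i]
    nlinarith
  · simp only [not_exists, not_and] at hsplit
    have hlen := length_le_of_forall_not_runAt hx hRS hruns hsplit
    have hbound := h₀ a ℓ fun i hi => hrun i (by omega)
    calc (2 * K + 6) * D * countNe x o a ℓ = (2 * K + 6) * (D * countNe x o a ℓ) := by ring
      _ ≤ (2 * K + 6) * (E * (ℓ + N₀)) := Nat.mul_le_mul_left _ hbound
      _ = E * ((2 * K + 6) * (ℓ + N₀)) := by ring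
      _ ≤ E * ((2 * K + 5) * (ℓ + N₁)) := Nat.mul_le_mul_left _ (by nlinarith)
      _ = (2 * K + 5) * E * (ℓ + N₁) := by ring

theorem exists_scale_countNe_le [Finite A] [TopologicalSpace A] [T1Space A] (hX : IsSubshift X)
    (hmin : ∀ M, MinimalSubsystem X M → M = {fun _ => o}) (hx : x ∈ X) {n : ℕ → ℕ}
    (hn : StrictMono n) (hrs : ∀ k, RS X (n k) ⊆ {List.replicate (n k) o}) {K : ℕ}
    (hK : ∀ m : ℕ, 1 ≤ m → complexity X m ≤ K * m) (t : ℕ) :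
    ∃ N, (∀ p : ℤ, ∃ k : ℕ, RunAt x o N (p + k)) ∧
      ∀ (a : ℤ) (ℓ : ℕ), RunAt x o N (a + ℓ) →
        (2 * K + 6) ^ t * countNe x o a ℓ ≤ (2 * K + 5) ^ t * (ℓ + N) := by
  induction t with
  | zero =>
    refine ⟨n 0, exists_runAt_add hX hmin hx (hrs 0), fun a ℓ _ => ?_⟩
    simpa using (countNe_le a ℓ).trans (Nat.le_add_right ℓ (n 0))
  | succ t ih =>
    obtain ⟨N₀, -, h₀⟩ := ih
    have hN₁ : 2 * N₀ + 1 ≤ n (2 * N₀ + 1) := hn.le_apply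
    have hruns := exists_runAt_add hX hmin hx (hrs (2 * N₀ + 1))
    refine ⟨_, hruns, fun a ℓ hrun => ?_⟩
    rw [pow_succ', pow_succ']
    exact countNe_bound_step hx (by omega) (by omega) (hrs _) (hK _ (by omega)) hruns h₀ a ℓ hrun

end Counting

section Frequency

theorem measure_setOf_ne_pos [MeasurableSpace A] [MeasurableSingletonClass A]
    {μ : Measure (ℤ → A)} [IsProbabilityMeasure μ] (hμ : MeasurePreserving (shiftBy 1) μ μ)
    {o : A} (hne : μ ≠ Measure.dirac (fun _ => o)) : 0 < μ {y | y 0 ≠ o} := by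
  have hmeas (i : ℤ) : MeasurableSet {y : ℤ → A | y i ≠ o} :=
    (measurableSet_singleton o).compl.preimage (measurable_pi_apply i)
  have hstep (i : ℤ) : μ {y | y (i + 1) ≠ o} = μ {y | y i ≠ o} :=
    hμ.measure_preimage (hmeas i).nullMeasurableSet
  have hall (i : ℤ) : μ {y | y i ≠ o} = μ {y | y 0 ≠ o} := by
    induction i using Int.induction_on with
    | zero => rfl
    | succ i ih => rw [hstep, ih]
    | pred i ih => rw [← ih, ← hstep, sub_add_cancel]
  by_contra hpos
  have hnull (i : ℤ) : μ {y | y i ≠ o} = 0 := by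
    rw [hall i]
    simpa using hpos
  have hae : ∀ᵐ y ∂μ, y = fun _ => o := by
    filter_upwards [ae_all_iff.2 fun i => (ae_iff (p := fun y : ℤ → A => y i = o)).2 (hnull i)]
      with y hy
    exact funext hy
  have hone : μ {fun _ => o} = 1 :=
    (prob_compl_eq_zero_iff (measurableSet_singleton _)).1 (ae_iff.1 hae)
  refine hne ?_
  rw [(Measure.ae_mem_finset_iff (μ := μ) (s := {fun _ => o})).1 (by simpa using hae)]
  simp [hone]

theorem tendsto_countNe_div [DecidableEq A] [TopologicalSpace A] [DiscreteTopology A]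
    [MeasurableSpace A] [MeasurableSingletonClass A] {μ : Measure (ℤ → A)} {x : ℤ → A}
    (hx : GenericFor x μ) (o : A) :
    Tendsto (fun N : ℕ => (countNe x o 0 N : ℝ) / N) atTop (𝓝 (μ.real {y | y 0 ≠ o})) := by
  have hS : MeasurableSet {y : ℤ → A | y 0 ≠ o} :=
    (measurableSet_singleton o).compl.preimage (measurable_pi_apply 0)
  have hcont : Continuous ({y : ℤ → A | y 0 ≠ o}.indicator (1 : (ℤ → A) → ℝ)) :=
    ((isClopen_discrete {o}ᶜ).preimage (continuous_apply 0)).continuous_indicator continuous_const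
  convert hx _ hcont using 2 with N
  · simp [countNe, shiftBy, Set.indicator_apply]
  · rw [integral_indicator_one hS]

theorem le_of_tendsto_div_of_frequently_le {u : ℕ → ℝ} {α c C : ℝ}
    (hu : Tendsto (fun m : ℕ => u m / m) atTop (𝓝 α))
    (hle : ∃ᶠ m : ℕ in atTop, u m ≤ c * m + C) : α ≤ c := by
  by_contra! hlt
  have h₁ : ∀ᶠ m : ℕ in atTop, (c + α) / 2 < u m / m := hu.eventually (lt_mem_nhds (by linarith))
  have h₂ : ∀ᶠ m : ℕ in atTop, C < (α - c) / 2 * m :=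
    (tendsto_natCast_atTop_atTop.const_mul_atTop (by linarith)).eventually_gt_atTop C
  have h₃ : ∀ᶠ m : ℕ in atTop, (0 : ℝ) < m := tendsto_natCast_atTop_atTop.eventually_gt_atTop 0
  obtain ⟨m, hm, hm₁, hm₂, hm₃⟩ := (hle.and_eventually (h₁.and (h₂.and h₃))).exists
  rw [lt_div_iff₀ hm₃] at hm₁
  nlinarith

end Frequency

theorem stmt19_general (X : Set (ℤ → Fin 2)) (hX : IsSubshift X)
    (hmin : ∀ M : Set (ℤ → Fin 2), MinimalSubsystem X M ↔ M = {fun _ => 0})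
    (μ : Measure (ℤ → Fin 2)) [IsProbabilityMeasure μ]
    (herg : Ergodic (shiftBy 1) μ)
    (hμne : μ ≠ Measure.dirac (fun _ => 0))
    (x : ℤ → Fin 2) (hxX : x ∈ X) (hgen : GenericFor x μ)
    (n : ℕ → ℕ) (hn : StrictMono n)
    (hrs : ∀ k, RS X (n k) = {List.replicate (n k) (0 : Fin 2)})
    (K : ℕ) (hK : ∀ m : ℕ, 1 ≤ m → complexity X m < K * m) :
    False := by
  have hα : 0 < μ.real {y | y 0 ≠ 0} :=
    ENNReal.toReal_pos (measure_setOf_ne_pos herg.toMeasurePreserving hμne).ne' (measure_ne_top _ _)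
  set θ : ℝ := (2 * K + 5) / (2 * K + 6)
  have hθ : θ < 1 := by rw [div_lt_one (by positivity)]; linarith
  obtain ⟨t, ht⟩ := exists_pow_lt_of_lt_one hα hθ
  obtain ⟨N, hruns, hbound⟩ := exists_scale_countNe_le hX (fun M hM => (hmin M).1 hM) hxX hn
    (fun k => (hrs k).le) (fun m hm => (hK m hm).le) t
  refine ht.not_ge (le_of_tendsto_div_of_frequently_le (C := θ ^ t * N) (tendsto_countNe_div hgen 0)
    (frequently_atTop.2 fun j => ?_))
  obtain ⟨k, hk⟩ := hruns j
  refine ⟨j + k, by omega, ?_⟩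
  have hcount := hbound 0 (j + k) (by simpa using hk)
  rw [← mul_add, div_pow, div_mul_eq_mul_div, le_div_iff₀ (by positivity), mul_comm]
  exact_mod_cast hcount

theorem stmt19 (X : Set (ℤ → Fin 2)) (hX : IsSubshift X)
    (x0 : ℤ → Fin 2) (hx0 : X = orbitClosure x0)
    (hmin : ∀ M : Set (ℤ → Fin 2), MinimalSubsystem X M ↔ M = {fun _ => 0})
    (μ : Measure (ℤ → Fin 2)) [IsProbabilityMeasure μ]
    (herg : Ergodic (shiftBy 1) μ) (hμX : μ X = 1)
    (hμne : μ ≠ Measure.dirac (fun _ => 0))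
    (x : ℤ → Fin 2) (hxX : x ∈ X) (hgen : GenericFor x μ)
    (n : ℕ → ℕ) (hn : StrictMono n)
    (hrs : ∀ k, RS X (n k) = {List.replicate (n k) (0 : Fin 2)})
    (K : ℕ) (hK : ∀ m : ℕ, 1 ≤ m → complexity X m < K * m) :
    False :=
  stmt19_general X hX hmin μ herg hμne x hxX hgen n hn hrs K hK
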